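/- arXiv:2406.15180 — 3 statements merged into one kernel-verified Lean document; each statement's English description precedes it below -/
import Mathlib

section
/- Let N be a monotone norm on ℝⁿ that is differentiable at every point of the nonnegative orthant except the origin. If N is p-supermodular for some p ≥ 1, then N is p′-supermodular for every p′ ≥ p. -/
/-! Writing `q = p' / p ≥ 1`, we have `N ^ p' = (N ^ p) ^ q`, and `t ↦ t ^ q` is convex and
monotone on `[0, ∞)`. Such a function preserves the inequality `C - A ≤ D - B` between four
numbers `A ≤ B ≤ D`, `C`: for a convex function, increments over intervals of equal length grow
as the interval moves right. Apply this to `A, B, C, D = N(u)^p, N(u+v)^p, N(u+w)^p, N(u+v+w)^p`. -/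

noncomputable section

/-- A monotone norm on ℝⁿ: subadditive, absolutely homogeneous, point-separating, and
monotone on the nonnegative orthant. -/
def IsMonotoneNorm {n : ℕ} (N : (Fin n → ℝ) → ℝ) : Prop :=
  (∀ x y, N (x + y) ≤ N x + N y) ∧
  (∀ (c : ℝ) (x), N (c • x) = |c| * N x) ∧
  (∀ x, N x = 0 → x = 0) ∧
  (∀ x y : Fin n → ℝ, 0 ≤ x → x ≤ y → N x ≤ N y)

/-- `N` is `p`-supermodular: `N(u+v+w)^p − N(u+v)^p ≥ N(u+w)^p − N(u)^p` for all
nonnegative `u, v, w`. -/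
def IsPSupermodular {n : ℕ} (N : (Fin n → ℝ) → ℝ) (p : ℝ) : Prop :=
  ∀ u v w : Fin n → ℝ, 0 ≤ u → 0 ≤ v → 0 ≤ w →
    N (u + w) ^ p - N u ^ p ≤ N (u + v + w) ^ p - N (u + v) ^ p

section

variable {𝕜 : Type*} [Field 𝕜] [LinearOrder 𝕜] [IsStrictOrderedRing 𝕜] {s : Set 𝕜} {f : 𝕜 → 𝕜}

theorem ConvexOn.sub_le_sub_of_le_of_nonneg (hf : ConvexOn 𝕜 s f) {a b d : 𝕜} (ha : a ∈ s)
    (hbd : b + d ∈ s) (hab : a ≤ b) (hd : 0 ≤ d) : f (a + d) - f a ≤ f (b + d) - f b := by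
  rcases hd.eq_or_lt with rfl | hd
  · simp
  have hs := hf.1.ordConnected
  have had : a + d ∈ s := hs.out ha hbd ⟨by linarith, by linarith⟩
  have hb : b ∈ s := hs.out ha hbd ⟨hab, by linarith⟩
  have hlt : a < b + d := by linarith
  have hslope : slope f a (a + d) ≤ slope f b (b + d) :=
    calc slope f a (a + d) ≤ slope f a (b + d) :=
          hf.slope_mono ha ⟨had, (lt_add_of_pos_right a hd).ne'⟩ ⟨hbd, hlt.ne'⟩ (by linarith)
      _ = slope f (b + d) a := slope_comm f a (b + d)
      _ ≤ slope f (b + d) b :=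
          hf.slope_mono hbd ⟨ha, hlt.ne⟩ ⟨hb, (lt_add_of_pos_right b hd).ne⟩ hab
      _ = slope f b (b + d) := slope_comm f (b + d) b
  simpa [slope_def_field, div_le_div_iff_of_pos_right hd] using hslope

theorem ConvexOn.sub_le_sub_of_monotoneOn (hf : ConvexOn 𝕜 s f) (hf' : MonotoneOn f s)
    {a b c d : 𝕜} (ha : a ∈ s) (hc : c ∈ s) (hd : d ∈ s) (hab : a ≤ b) (hbd : b ≤ d)
    (h : c - a ≤ d - b) : f c - f a ≤ f d - f b := by
  have hs := hf.1.ordConnected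
  have hb : b ∈ s := hs.out ha hd ⟨hab, hbd⟩
  rcases le_or_gt c a with hca | hac
  · linarith [hf' hc ha hca, hf' hb hd hbd]
  have hbcad : b + (c - a) ∈ s := hs.out hb hd ⟨by linarith, by linarith⟩
  calc f c - f a = f (a + (c - a)) - f a := by rw [add_sub_cancel]
    _ ≤ f (b + (c - a)) - f b := hf.sub_le_sub_of_le_of_nonneg ha hbcad hab (by linarith)
    _ ≤ f d - f b := by linarith [hf' hbcad hd (by linarith)]

end

namespace IsMonotoneNorm

variable {n : ℕ} {N : (Fin n → ℝ) → ℝ}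

theorem nonneg (hN : IsMonotoneNorm N) (x : Fin n → ℝ) : 0 ≤ N x := by
  obtain ⟨hsub, hhom, -, -⟩ := hN
  have h0 : N 0 = 0 := by simpa using hhom 0 x
  have hneg : N (-x) = N x := by simpa using hhom (-1) x
  have := hsub x (-x)
  rw [add_neg_cancel, h0, hneg] at this
  linarith

theorem le_add (hN : IsMonotoneNorm N) {u v : Fin n → ℝ} (hu : 0 ≤ u) (hv : 0 ≤ v) :
    N u ≤ N (u + v) :=
  hN.2.2.2 u (u + v) hu (le_add_of_nonneg_right hv)

end IsMonotoneNorm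

theorem pSupermodular_mono_general {n : ℕ} (N : (Fin n → ℝ) → ℝ) (hN : IsMonotoneNorm N)
    (p : ℝ) (hp : 1 ≤ p) (hsup : IsPSupermodular N p)
    (p' : ℝ) (hp' : p ≤ p') :
    IsPSupermodular N p' := by
  intro u v w hu hv hw
  have hp0 : 0 < p := zero_lt_one.trans_le hp
  have hq : 1 ≤ p' / p := (one_le_div hp0).mpr hp'
  have hpow : ∀ x, (N x ^ p) ^ (p' / p) = N x ^ p' := fun x => by
    rw [← Real.rpow_mul (hN.nonneg x), mul_div_cancel₀ _ hp0.ne']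
  have hmem : ∀ x, N x ^ p ∈ Set.Ici (0 : ℝ) := fun x => Real.rpow_nonneg (hN.nonneg x) p
  have hmono : ∀ {x y}, N x ≤ N y → N x ^ p ≤ N y ^ p := fun h =>
    Real.rpow_le_rpow (hN.nonneg _) h hp0.le
  have key := (convexOn_rpow hq).sub_le_sub_of_monotoneOn
    (Real.monotoneOn_rpow_Ici_of_exponent_nonneg (zero_le_one.trans hq))
    (hmem u) (hmem (u + w)) (hmem (u + v + w)) (hmono (hN.le_add hu hv))
    (hmono (hN.le_add (add_nonneg hu hv) hw)) (hsup u v w hu hv hw)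
  simpa only [hpow] using key

/-- A differentiable `p`-supermodular monotone norm is also `p′`-supermodular for every
`p′ ≥ p`. -/
theorem pSupermodular_mono {n : ℕ} (N : (Fin n → ℝ) → ℝ) (hN : IsMonotoneNorm N)
    (hdiff : ∀ x : Fin n → ℝ, 0 ≤ x → x ≠ 0 → DifferentiableAt ℝ N x)
    (p : ℝ) (hp : 1 ≤ p) (hsup : IsPSupermodular N p)
    (p' : ℝ) (hp' : p ≤ p') :
    IsPSupermodular N p' :=
  pSupermodular_mono_general N hN p hp hsup p' hp'
end
end

section
/- Let G be an Orlicz function that is differentiable on [0,∞), and let x ∈ ℝⁿ have nonnegative coordinates with x ≠ 0. Assume the Orlicz norm ‖·‖_G is differentiable at x, that ∑_{ℓ=1}^n G(x_ℓ/‖x‖_G) = 1, and that γ(x) := ∑_{ℓ=1}^n (x_ℓ/‖x‖_G)·G′(x_ℓ/‖x‖_G) ≠ 0. Then for every coordinate i, the partial derivative of the Orlicz norm at x equals ∂_i‖x‖_G = G′(x_i/‖x‖_G) / γ(x). -/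
noncomputable section

def IsOrliczFunction (G : ℝ → ℝ) : Prop :=
  ContinuousOn G (Set.Ici 0) ∧ ConvexOn ℝ (Set.Ici 0) G ∧
  MonotoneOn G (Set.Ici 0) ∧ G 0 = 0 ∧
  Filter.Tendsto G Filter.atTop Filter.atTop

def orliczNorm {n : ℕ} (G : ℝ → ℝ) (x : Fin n → ℝ) : ℝ :=
  sInf {α : ℝ | 0 < α ∧ ∑ i, G (x i / α) ≤ 1}

/-!
For every nonzero `y ≥ 0` the infimum defining `‖y‖_G` is attained with `∑ G (yₗ / ‖y‖_G) = 1`: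
the admissible scales are bounded below by a positive constant because `G → ∞`, and the
modular `α ↦ ∑ G (yₗ / α)` is continuous at `‖y‖_G`. Hence along the ray `t ↦ x + t eᵢ`
(`t ≥ 0`), which stays in the positive cone, `∑ G ((x + t eᵢ)ₗ / ‖x + t eᵢ‖_G)` is constantly `1`.
Differentiating at `t = 0` from the right (`G` is only differentiable on `[0, ∞)`) gives
`∑ G'(xₗ/N) (δᵢₗ N - xₗ ∂ᵢN) / N² = 0` with `N = ‖x‖_G`, which solves to the formula.
-/

open Set Filter Topology

namespace IsOrliczFunction

variable {G : ℝ → ℝ} {n : ℕ}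

theorem map_zero (hG : IsOrliczFunction G) : G 0 = 0 := hG.2.2.2.1

theorem tendsto_atTop (hG : IsOrliczFunction G) : Tendsto G atTop atTop := hG.2.2.2.2

theorem nonneg (hG : IsOrliczFunction G) {t : ℝ} (ht : 0 ≤ t) : 0 ≤ G t :=
  hG.map_zero ▸ hG.2.2.1 self_mem_Ici ht ht

theorem tendsto_comp {α : Type*} {l : Filter α} {f : α → ℝ} {a : ℝ} (hG : IsOrliczFunction G)
    (ha : 0 ≤ a) (hf : Tendsto f l (𝓝 a)) (hf₀ : ∀ᶠ b in l, 0 ≤ f b) :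
    Tendsto (fun b => G (f b)) l (𝓝 (G a)) :=
  (hG.1 a ha).tendsto.comp (tendsto_nhdsWithin_iff.2 ⟨hf, hf₀⟩)

theorem continuousAt_sum_div (hG : IsOrliczFunction G) {y : Fin n → ℝ} (hy : 0 ≤ y) {α : ℝ}
    (hα : 0 < α) : ContinuousAt (fun β => ∑ i, G (y i / β)) α :=
  tendsto_finsetSum _ fun i _ => hG.tendsto_comp (div_nonneg (hy i) hα.le)
    (tendsto_const_nhds.div tendsto_id hα.ne')
    ((eventually_gt_nhds hα).mono fun _ hβ => div_nonneg (hy i) hβ.le)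

theorem tendsto_sum_div_atTop (hG : IsOrliczFunction G) {y : Fin n → ℝ} (hy : 0 ≤ y) :
    Tendsto (fun β => ∑ i, G (y i / β)) atTop (𝓝 0) := by
  have h : Tendsto (fun β => ∑ i, G (y i / β)) atTop (𝓝 (∑ _i : Fin n, G 0)) :=
    tendsto_finsetSum _ fun i _ => hG.tendsto_comp le_rfl
      (tendsto_const_nhds.div_atTop tendsto_id)
      ((eventually_gt_atTop 0).mono fun _ hβ => div_nonneg (hy i) hβ.le)
  simpa [hG.map_zero] using h

end IsOrliczFunction

def orliczScales {n : ℕ} (G : ℝ → ℝ) (y : Fin n → ℝ) : Set ℝ :=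
  {α : ℝ | 0 < α ∧ ∑ i, G (y i / α) ≤ 1}

section orliczScales

variable {G : ℝ → ℝ} {n : ℕ} {y : Fin n → ℝ}

theorem orliczScales_nonempty (hG : IsOrliczFunction G) (hy : 0 ≤ y) :
    (orliczScales G y).Nonempty := by
  obtain ⟨α, hle, hpos⟩ :=
    ((hG.tendsto_sum_div_atTop hy).eventually_le_const one_pos).and (eventually_gt_atTop 0)
      |>.exists
  exact ⟨α, hpos, hle⟩

theorem exists_pos_forall_le_of_mem_orliczScales (hG : IsOrliczFunction G) (hy : 0 ≤ y)
    {j : Fin n} (hj : 0 < y j) : ∃ δ > 0, ∀ α ∈ orliczScales G y, δ ≤ α := by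
  obtain ⟨M, hM⟩ := eventually_atTop.1 (hG.tendsto_atTop.eventually (eventually_gt_atTop 1))
  set M' := max M 1
  refine ⟨y j / M', div_pos hj (by positivity), fun α ⟨hα, hsum⟩ => ?_⟩
  have hterm : G (y j / α) ≤ 1 := (Finset.single_le_sum
    (fun i _ => hG.nonneg (div_nonneg (hy i) hα.le)) (Finset.mem_univ j)).trans hsum
  have hlt : y j / α < M' := by
    by_contra! h
    exact (hM _ ((le_max_left _ _).trans h)).not_ge hterm
  rw [div_le_iff₀ (by positivity), mul_comm]
  exact ((div_lt_iff₀ hα).1 hlt).le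

theorem orliczNorm_pos (hG : IsOrliczFunction G) (hy : 0 < y) : 0 < orliczNorm G y := by
  obtain ⟨hy, j, hj⟩ := Pi.lt_def.1 hy
  obtain ⟨δ, hδ, hle⟩ := exists_pos_forall_le_of_mem_orliczScales hG hy hj
  exact hδ.trans_le (le_csInf (orliczScales_nonempty hG hy) hle)

theorem sum_div_orliczNorm_eq_one (hG : IsOrliczFunction G) (hy : 0 < y) :
    ∑ i, G (y i / orliczNorm G y) = 1 := by
  have hN := orliczNorm_pos hG hy
  obtain ⟨hy, j, hj⟩ := Pi.lt_def.1 hy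
  have hne := orliczScales_nonempty hG hy
  obtain ⟨δ, -, hle⟩ := exists_pos_forall_le_of_mem_orliczScales hG hy hj
  have hbdd : BddBelow (orliczScales G y) := ⟨δ, hle⟩
  have hcont := hG.continuousAt_sum_div hy hN
  refine le_antisymm ?_ (not_lt.1 fun hlt => ?_)
  · have : (𝓝[orliczScales G y] orliczNorm G y).NeBot :=
      mem_closure_iff_nhdsWithin_neBot.1 (csInf_mem_closure hne hbdd)
    exact le_of_tendsto (hcont.tendsto.mono_left nhdsWithin_le_nhds)
      (eventually_nhdsWithin_of_forall fun _ hα => (hα : _ ∈ orliczScales G y).2)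
  · -- scales slightly below the infimum would still be admissible
    have hbelow : ∀ᶠ α in 𝓝[<] orliczNorm G y,
        (∑ i, G (y i / α) < 1 ∧ 0 < α) ∧ α < orliczNorm G y :=
      ((hcont.eventually (eventually_lt_nhds hlt)).and (eventually_gt_nhds hN)
        |>.filter_mono nhdsWithin_le_nhds).and self_mem_nhdsWithin
    obtain ⟨α, ⟨hαlt, hαpos⟩, hαN⟩ := hbelow.exists
    exact (csInf_le hbdd ⟨hαpos, hαlt.le⟩).not_gt hαN

end orliczScales

theorem hasDerivWithinAt_sum_comp_div {n : ℕ} {G G' : ℝ → ℝ}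
    (hd : ∀ t ∈ Ici (0 : ℝ), HasDerivWithinAt G (G' t) (Ici 0) t)
    {c : ℝ → Fin n → ℝ} {c' : Fin n → ℝ} {f : ℝ → ℝ} {f' : ℝ} {s : Set ℝ} {t₀ : ℝ}
    (hc : HasDerivWithinAt c c' s t₀) (hf : HasDerivWithinAt f f' s t₀) (hf₀ : f t₀ ≠ 0)
    (ht₀ : t₀ ∈ s) (hnonneg : ∀ t ∈ s, ∀ i, 0 ≤ c t i / f t) :
    HasDerivWithinAt (fun t => ∑ i, G (c t i / f t))
      (∑ i, G' (c t₀ i / f t₀) * ((c' i * f t₀ - c t₀ i * f') / f t₀ ^ 2)) s t₀ :=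
  HasDerivWithinAt.fun_sum fun i _ =>
    (hd _ (hnonneg t₀ ht₀ i)).comp t₀ ((hasDerivWithinAt_pi.1 hc i).div hf hf₀)
      fun t ht => hnonneg t ht i

theorem eq_div_of_sum_mul_single_sub_eq_zero {n : ℕ} {a x : Fin n → ℝ} {N d : ℝ} (i : Fin n)
    (hN : N ≠ 0) (hγ : ∑ ℓ, x ℓ / N * a ℓ ≠ 0)
    (h : ∑ ℓ, a ℓ * (((Pi.single i 1 : Fin n → ℝ) ℓ * N - x ℓ * d) / N ^ 2) = 0) :
    d = a i / ∑ ℓ, x ℓ / N * a ℓ := by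
  have hsplit : ∑ ℓ, a ℓ * (((Pi.single i 1 : Fin n → ℝ) ℓ * N - x ℓ * d) / N ^ 2)
      = (a i - d * ∑ ℓ, x ℓ / N * a ℓ) / N := calc
    _ = ∑ ℓ, (a ℓ * (Pi.single i 1 : Fin n → ℝ) ℓ - d * (x ℓ / N * a ℓ)) / N :=
      Finset.sum_congr rfl fun ℓ _ => by field_simp
    _ = _ := by
      rw [← Finset.sum_div, Finset.sum_sub_distrib, ← Finset.mul_sum]
      simp [Pi.single_apply]
  rw [hsplit, div_eq_zero_iff, sub_eq_zero] at h
  exact eq_div_of_mul_eq hγ (h.resolve_right hN).symm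

theorem orliczNorm_gradient_general {n : ℕ} (G G' : ℝ → ℝ) (hG : IsOrliczFunction G)
    (hd : ∀ t ∈ Set.Ici (0 : ℝ), HasDerivWithinAt G (G' t) (Set.Ici 0) t)
    (x : Fin n → ℝ) (hx : 0 ≤ x) (hx0 : x ≠ 0)
    (D : (Fin n → ℝ) →L[ℝ] ℝ)
    (hdiff : HasFDerivAt (orliczNorm G) D x)
    (hγ : (∑ ℓ, (x ℓ / orliczNorm G x) * G' (x ℓ / orliczNorm G x)) ≠ 0) :
    ∀ i : Fin n,
      D (Pi.single i 1) =
        G' (x i / orliczNorm G x) /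
          (∑ ℓ, (x ℓ / orliczNorm G x) * G' (x ℓ / orliczNorm G x)) := by
  intro i
  set c : ℝ → Fin n → ℝ := fun t => x + t • Pi.single i 1
  have hc : HasDerivAt c (Pi.single i 1) 0 := by
    simpa [c] using ((hasDerivAt_id (0 : ℝ)).smul_const (Pi.single i (1 : ℝ))).const_add x
  have hc₀ : c 0 = x := by simp [c]
  have hpos : ∀ t ∈ Ici (0 : ℝ), 0 < c t := fun t ht =>
    (lt_of_le_of_ne hx (Ne.symm hx0)).trans_le
      (le_add_of_nonneg_right (smul_nonneg ht (Pi.single_nonneg.2 zero_le_one)))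
  have hN : orliczNorm G x ≠ 0 := (hc₀ ▸ orliczNorm_pos hG (hpos 0 self_mem_Ici)).ne'
  have hnorm : HasDerivWithinAt (fun t => orliczNorm G (c t)) (D (Pi.single i 1)) (Ici 0) 0 :=
    (hc₀ ▸ hdiff).comp_hasDerivWithinAt 0 hc.hasDerivWithinAt
  have hmod := hasDerivWithinAt_sum_comp_div hd hc.hasDerivWithinAt hnorm (hc₀ ▸ hN)
    self_mem_Ici fun t ht j => div_nonneg ((hpos t ht).le j) (orliczNorm_pos hG (hpos t ht)).le
  have hone : HasDerivWithinAt (fun t => ∑ j, G (c t j / orliczNorm G (c t))) 0 (Ici 0) 0 :=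
    (hasDerivWithinAt_const 0 _ 1).congr
      (fun t ht => sum_div_orliczNorm_eq_one hG (hpos t ht))
      (sum_div_orliczNorm_eq_one hG (hpos 0 self_mem_Ici))
  have hderiv := (uniqueDiffOn_Ici 0 0 self_mem_Ici).eq_deriv _ hmod hone
  rw [hc₀] at hderiv
  exact eq_div_of_sum_mul_single_sub_eq_zero i hN hγ hderiv

/-- The gradient formula for the Orlicz norm: if `‖·‖_G` is differentiable at `x` with
derivative `D`, `∑ₗ G(xₗ/‖x‖_G) = 1`, and `γ(x) = ∑ₗ (xₗ/‖x‖_G)·G′(xₗ/‖x‖_G) ≠ 0`, then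
`∂ᵢ‖x‖_G = G′(xᵢ/‖x‖_G) / γ(x)`. -/
theorem orliczNorm_gradient {n : ℕ} (G G' : ℝ → ℝ) (hG : IsOrliczFunction G)
    (hd : ∀ t ∈ Set.Ici (0 : ℝ), HasDerivWithinAt G (G' t) (Set.Ici 0) t)
    (x : Fin n → ℝ) (hx : 0 ≤ x) (hx0 : x ≠ 0)
    (D : (Fin n → ℝ) →L[ℝ] ℝ)
    (hdiff : HasFDerivAt (orliczNorm G) D x)
    (hunit : ∑ ℓ, G (x ℓ / orliczNorm G x) = 1)
    (hγ : (∑ ℓ, (x ℓ / orliczNorm G x) * G' (x ℓ / orliczNorm G x)) ≠ 0) :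
    ∀ i : Fin n,
      D (Pi.single i 1) =
        G' (x i / orliczNorm G x) /
          (∑ ℓ, (x ℓ / orliczNorm G x) * G' (x ℓ / orliczNorm G x)) :=
  orliczNorm_gradient_general G G' hG hd x hx hx0 D hdiff hγ
end
end

section
/- Let G be an Orlicz function and n ≥ 1. There exist nonnegative reals a₁, …, aₙ and b₁, …, bₙ such that the function G̃(t) := ∑_{i=1}^n max{0, a_i·t − b_i} satisfies ‖x‖_G ≤ ‖x‖_{G̃} ≤ 2·‖x‖_G for all x ∈ ℝⁿ with nonnegative coordinates. -/
noncomputable section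

/-!
Choose points `0 ≤ t₀ < t₁ < ⋯ < tₙ` with `G tⱼ = j/n` (intermediate value theorem) and let `L` be
the piecewise linear interpolant of `G` at these points, continued linearly beyond `tₙ`. Its slopes
are nonnegative and increasing, so `L` is a sum of `n` hinges `cₖ (u - tₖ)₊` with `cₖ ≥ 0`.
Convexity gives `G ≤ L ≤ G + 1/n` on `[0, tₙ]`, and both `G` and `L` exceed `1` beyond `tₙ`.
Hence `∑ L(yᵢ) ≤ 1` forces `∑ G(yᵢ) ≤ 1`; conversely, if `∑ G(yᵢ) ≤ 1` then, since
`L(u/2) ≤ L(u)/2`, we get `∑ L(yᵢ/2) ≤ (∑ G(yᵢ) + n · 1/n)/2 ≤ 1`.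
-/

open Finset

def hingeSum (c t : ℕ → ℝ) (m : ℕ) (u : ℝ) : ℝ :=
  ∑ k ∈ range m, c k * max 0 (u - t k)

section HingeSum

variable {c t : ℕ → ℝ} {m : ℕ}

theorem hingeSum_eq_sum_max (hc : ∀ k, 0 ≤ c k) (u : ℝ) :
    hingeSum c t m u = ∑ i : Fin m, max 0 (c i * u - c i * t i) := by
  rw [hingeSum, ← Fin.sum_univ_eq_sum_range]
  refine sum_congr rfl fun i _ => ?_
  rw [mul_max_of_nonneg _ _ (hc i), mul_zero, mul_sub]

theorem hingeSum_nonneg (hc : ∀ k, 0 ≤ c k) (u : ℝ) : 0 ≤ hingeSum c t m u :=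
  sum_nonneg fun k _ => mul_nonneg (hc k) (le_max_left _ _)

theorem hingeSum_mono (hc : ∀ k, 0 ≤ c k) : Monotone (hingeSum c t m) := fun u v huv =>
  sum_le_sum fun k _ => mul_le_mul_of_nonneg_left (max_le_max le_rfl (by linarith)) (hc k)

theorem hingeSum_mul_le (hc : ∀ k, 0 ≤ c k) (ht : ∀ k, 0 ≤ t k) {r : ℝ} (hr₀ : 0 ≤ r)
    (hr₁ : r ≤ 1) (u : ℝ) : hingeSum c t m (r * u) ≤ r * hingeSum c t m u := by
  rw [hingeSum, hingeSum, mul_sum]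
  refine sum_le_sum fun k _ => ?_
  rw [mul_left_comm, mul_max_of_nonneg _ _ hr₀, mul_zero]
  exact mul_le_mul_of_nonneg_left (max_le_max le_rfl (by nlinarith [ht k])) (hc k)

theorem sum_mul_sub_le_hingeSum (hc : ∀ k, 0 ≤ c k) {j : ℕ} (hj : j ≤ m) (u : ℝ) :
    ∑ k ∈ range j, c k * (u - t k) ≤ hingeSum c t m u :=
  calc ∑ k ∈ range j, c k * (u - t k) ≤ ∑ k ∈ range j, c k * max 0 (u - t k) :=
        sum_le_sum fun k _ => mul_le_mul_of_nonneg_left (le_max_right _ _) (hc k)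
    _ ≤ hingeSum c t m u :=
        sum_le_sum_of_subset_of_nonneg (range_subset_range.2 hj) fun k _ _ =>
          mul_nonneg (hc k) (le_max_left _ _)

theorem hingeSum_apply_knot (ht : Monotone t) {j : ℕ} (hj : j ≤ m) :
    hingeSum c t m (t j) = ∑ k ∈ range j, c k * (t j - t k) := by
  rw [hingeSum, ← sum_range_add_sum_Ico _ hj]
  have hbelow : ∀ k ∈ range j, c k * max 0 (t j - t k) = c k * (t j - t k) := fun k hk => by
    rw [max_eq_right (sub_nonneg.2 (ht (mem_range.1 hk).le))]
  have habove : ∀ k ∈ Ico j m, c k * max 0 (t j - t k) = 0 := fun k hk => by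
    rw [max_eq_left (sub_nonpos.2 (ht (mem_Ico.1 hk).1)), mul_zero]
  rw [sum_congr rfl hbelow, sum_eq_zero habove, add_zero]

theorem hingeSum_apply_knot_succ (ht : Monotone t) {j : ℕ} (hj : j < m) :
    hingeSum c t m (t (j + 1)) =
      hingeSum c t m (t j) + (∑ k ∈ range (j + 1), c k) * (t (j + 1) - t j) := by
  rw [hingeSum_apply_knot ht hj, hingeSum_apply_knot ht hj.le, sum_mul, sum_range_succ,
    sum_range_succ, ← add_assoc, ← sum_add_distrib]
  congr 1
  exact sum_congr rfl fun k _ => by ring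

theorem hingeSum_knot_add_mul_le (hc : ∀ k, 0 ≤ c k) (ht : Monotone t) {j : ℕ} (hj : j ≤ m)
    (u : ℝ) : hingeSum c t m (t j) + (∑ k ∈ range j, c k) * (u - t j) ≤ hingeSum c t m u := by
  refine le_of_eq_of_le ?_ (sum_mul_sub_le_hingeSum hc hj u)
  rw [hingeSum_apply_knot ht hj, sum_mul, ← sum_add_distrib]
  exact sum_congr rfl fun k _ => by ring

end HingeSum

section ConvexChord

variable {s : Set ℝ} {f : ℝ → ℝ} {a b u : ℝ}

theorem ConvexOn.le_add_slope_mul_sub (hf : ConvexOn ℝ s f) (ha : a ∈ s) (hb : b ∈ s)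
    (hau : a ≤ u) (hub : u ≤ b) : f u ≤ f b + slope f a b * (u - b) := by
  rcases hub.eq_or_lt with rfl | hub
  · simp
  have hslope : slope f b a ≤ slope f b u :=
    hf.slope_mono hb ⟨ha, (hau.trans_lt hub).ne⟩
      ⟨hf.1.ordConnected.out ha hb ⟨hau, hub.le⟩, hub.ne⟩ hau
  have hfu : f u - f b = (u - b) * slope f b u := by simpa using (sub_smul_slope f b u).symm
  rw [slope_comm] at hslope
  nlinarith

theorem ConvexOn.add_slope_mul_sub_le (hf : ConvexOn ℝ s f) (ha : a ∈ s) (hu : u ∈ s)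
    (hab : a < b) (hbu : b ≤ u) : f b + slope f a b * (u - b) ≤ f u := by
  rcases hbu.eq_or_lt with rfl | hbu
  · simp
  have hb : b ∈ s := hf.1.ordConnected.out ha hu ⟨hab.le, hbu.le⟩
  have hslope : slope f b a ≤ slope f b u :=
    hf.slope_mono hb ⟨ha, hab.ne⟩ ⟨hu, hbu.ne'⟩ (hab.trans hbu).le
  have hfu : f u - f b = (u - b) * slope f b u := by simpa using (sub_smul_slope f b u).symm
  rw [slope_comm] at hslope
  nlinarith

end ConvexChord

def chordSlope (G : ℝ → ℝ) (t : ℕ → ℝ) : ℕ → ℝ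
  | 0 => 0
  | j + 1 => slope G (t j) (t (j + 1))

def chordInterpolant (G : ℝ → ℝ) (t : ℕ → ℝ) (m : ℕ) : ℝ → ℝ :=
  hingeSum (fun k => chordSlope G t (k + 1) - chordSlope G t k) t m

section ChordInterpolant

variable {G : ℝ → ℝ} {t : ℕ → ℝ} {m : ℕ}

theorem sum_range_chordSlope_sub (G : ℝ → ℝ) (t : ℕ → ℝ) (j : ℕ) :
    ∑ k ∈ range j, (chordSlope G t (k + 1) - chordSlope G t k) = chordSlope G t j := by
  rw [sum_range_sub, chordSlope, sub_zero]

theorem chordSlope_monotone {s : Set ℝ} (hG : ConvexOn ℝ s G) (hts : ∀ j, t j ∈ s)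
    (ht : StrictMono t) (h₀₁ : G (t 0) ≤ G (t 1)) : Monotone (chordSlope G t) := by
  refine monotone_nat_of_le_succ fun j => ?_
  cases j with
  | zero =>
    simp only [chordSlope, slope_def_field]
    exact div_nonneg (sub_nonneg.2 h₀₁) (sub_nonneg.2 (ht zero_lt_one).le)
  | succ j =>
    simp only [chordSlope, slope_def_field]
    exact hG.slope_mono_adjacent (hts _) (hts _) (ht j.lt_succ_self) (ht (j + 1).lt_succ_self)

theorem chordInterpolant_apply_knot (ht : Monotone t) {j : ℕ} (hj : j ≤ m) :
    chordInterpolant G t m (t j) = G (t j) - G (t 0) := by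
  induction j with
  | zero => simp [chordInterpolant, hingeSum_apply_knot ht hj]
  | succ j ih =>
    rw [chordInterpolant, hingeSum_apply_knot_succ ht hj, ← chordInterpolant, ih (by omega),
      sum_range_chordSlope_sub, chordSlope, mul_comm, ← smul_eq_mul, sub_smul_slope, vsub_eq_sub]
    ring

theorem chordInterpolant_knot_add_mul_le (hτ : Monotone (chordSlope G t)) (ht : Monotone t)
    {j : ℕ} (hj : j ≤ m) (u : ℝ) :
    G (t j) - G (t 0) + chordSlope G t j * (u - t j) ≤ chordInterpolant G t m u := by
  have h := hingeSum_knot_add_mul_le (fun k => sub_nonneg.2 (hτ k.le_succ)) ht hj u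
  rwa [sum_range_chordSlope_sub, ← chordInterpolant, chordInterpolant_apply_knot ht hj] at h

end ChordInterpolant

theorem forall_le_of_forall_Ioc {t : ℕ → ℝ} {P : ℝ → Prop} {m : ℕ} (h₀ : ∀ u ≤ t 0, P u)
    (hstep : ∀ j < m, ∀ u ∈ Set.Ioc (t j) (t (j + 1)), P u) : ∀ u ≤ t m, P u := by
  induction m with
  | zero => exact h₀
  | succ m ih =>
    intro u hu
    rcases le_or_gt u (t m) with h | h
    · exact ih (fun j hj => hstep j (by omega)) u h
    · exact hstep m m.lt_succ_self u ⟨h, hu⟩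

section OrliczNorm

variable {n : ℕ} {x : Fin n → ℝ}

theorem exists_sum_div_le_one {F : ℝ → ℝ} (hx : 0 ≤ x) {δ : ℝ} (hδ : 0 < δ)
    (hF : ∀ u, 0 ≤ u → u ≤ δ → F u ≤ 1 / n) : ∃ α > 0, ∑ i, F (x i / α) ≤ 1 := by
  have hS : 0 ≤ ∑ i, x i := sum_nonneg fun i _ => hx i
  refine ⟨(∑ i, x i + 1) / δ, by positivity, ?_⟩
  calc ∑ i, F (x i / ((∑ i, x i + 1) / δ)) ≤ ∑ _i : Fin n, 1 / (n : ℝ) := by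
        refine sum_le_sum fun i _ => hF _ (div_nonneg (hx i) (by positivity)) ?_
        rw [div_div_eq_mul_div, div_le_iff₀ (by positivity)]
        have : x i ≤ ∑ j, x j := single_le_sum (fun j _ => hx j) (mem_univ i)
        nlinarith
    _ ≤ 1 := by
        rw [sum_const, card_univ, Fintype.card_fin, nsmul_eq_mul, mul_one_div]
        exact div_self_le_one _

theorem orliczNorm_le_mul {F₁ F₂ : ℝ → ℝ} (hx : 0 ≤ x) {c : ℝ} (hc : 0 < c)
    (hne : ∃ α > 0, ∑ i, F₁ (x i / α) ≤ 1)
    (h : ∀ y : Fin n → ℝ, 0 ≤ y → ∑ i, F₁ (y i) ≤ 1 → ∑ i, F₂ (y i / c) ≤ 1) :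
    orliczNorm F₂ x ≤ c * orliczNorm F₁ x := by
  have hscaled : ∀ α, 0 < α → ∑ i, F₁ (x i / α) ≤ 1 → orliczNorm F₂ x ≤ c * α := by
    intro α hα hsum
    refine csInf_le ⟨0, fun β hβ => hβ.1.le⟩ ⟨mul_pos hc hα, ?_⟩
    simpa only [div_div, mul_comm α c] using
      h (fun i => x i / α) (fun i => div_nonneg (hx i) hα.le) hsum
  rw [← div_le_iff₀' hc]
  obtain ⟨α, hα, hsum⟩ := hne
  exact le_csInf ⟨α, hα, hsum⟩ fun β ⟨hβ, hβsum⟩ => (div_le_iff₀' hc).2 (hscaled β hβ hβsum)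

end OrliczNorm

def LevelNodes (G : ℝ → ℝ) (n : ℕ) (t : ℕ → ℝ) : Prop :=
  ∀ j, 0 ≤ t j ∧ G (t j) = j / n

theorem exists_levelNodes {G : ℝ → ℝ} (hGc : ContinuousOn G (Set.Ici 0)) (hG0 : G 0 = 0)
    (htop : Filter.Tendsto G Filter.atTop Filter.atTop) (n : ℕ) : ∃ t, LevelNodes G n t := by
  have hlevel : ∀ j : ℕ, ∃ s, 0 ≤ s ∧ G s = j / n := fun j =>
    intermediate_value_Ici hGc htop (show G 0 ≤ j / n by rw [hG0]; positivity)
  choose t ht using hlevel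
  exact ⟨t, ht⟩

namespace LevelNodes

variable {G : ℝ → ℝ} {n : ℕ} {t : ℕ → ℝ}

theorem apply_self (hn : 0 < n) (ht : LevelNodes G n t) : G (t n) = 1 := by
  rw [(ht n).2, div_self (by positivity)]

variable (hGm : MonotoneOn G (Set.Ici 0)) (hn : 0 < n)
include hGm hn

theorem strictMono (ht : LevelNodes G n t) : StrictMono t := by
  refine strictMono_nat_of_lt_succ fun j => lt_of_not_ge fun hle => ?_
  have h := hGm (ht _).1 (ht _).1 hle
  rw [(ht _).2, (ht _).2, div_le_div_iff_of_pos_right (by positivity)] at h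
  push_cast at h
  linarith

theorem chordSlope_succ_pos (ht : LevelNodes G n t) (j : ℕ) : 0 < chordSlope G t (j + 1) := by
  rw [chordSlope, slope_def_field, (ht _).2, (ht _).2, ← sub_div]
  refine div_pos (div_pos (by push_cast; linarith) (by positivity)) ?_
  exact sub_pos.2 (ht.strictMono hGm hn j.lt_succ_self)

theorem chordInterpolant_apply_knot (ht : LevelNodes G n t) {j : ℕ} (hj : j ≤ n) :
    chordInterpolant G t n (t j) = j / n := by
  rw [_root_.chordInterpolant_apply_knot (ht.strictMono hGm hn).monotone hj, (ht j).2, (ht 0).2]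
  simp

variable (hGconv : ConvexOn ℝ (Set.Ici 0) G)
include hGconv

theorem chordSlope_monotone (ht : LevelNodes G n t) : Monotone (chordSlope G t) :=
  _root_.chordSlope_monotone hGconv (fun j => (ht j).1) (ht.strictMono hGm hn)
    (by rw [(ht 0).2, (ht 1).2]; gcongr; norm_num)

theorem chordInterpolant_coeff_nonneg (ht : LevelNodes G n t) (k : ℕ) :
    0 ≤ chordSlope G t (k + 1) - chordSlope G t k :=
  sub_nonneg.2 (ht.chordSlope_monotone hGm hn hGconv k.le_succ)

theorem le_chordInterpolant (ht : LevelNodes G n t) {u : ℝ} (hu : 0 ≤ u) (hun : u ≤ t n) :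
    G u ≤ chordInterpolant G t n u := by
  have htm := (ht.strictMono hGm hn).monotone
  have hτ := ht.chordSlope_monotone hGm hn hGconv
  refine forall_le_of_forall_Ioc (P := fun u => 0 ≤ u → G u ≤ chordInterpolant G t n u)
    (fun u hu₀ hu => ?_) (fun j hj u hu _ => ?_) u hun hu
  · calc G u ≤ G (t 0) := hGm hu (ht 0).1 hu₀
      _ = 0 := by simp [(ht 0).2]
      _ ≤ chordInterpolant G t n u :=
          hingeSum_nonneg (ht.chordInterpolant_coeff_nonneg hGm hn hGconv) u
  · calc G u ≤ G (t (j + 1)) + chordSlope G t (j + 1) * (u - t (j + 1)) :=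
          hGconv.le_add_slope_mul_sub (ht j).1 (ht (j + 1)).1 hu.1.le hu.2
      _ = G (t (j + 1)) - G (t 0) + chordSlope G t (j + 1) * (u - t (j + 1)) := by
          simp [(ht 0).2]
      _ ≤ chordInterpolant G t n u := chordInterpolant_knot_add_mul_le hτ htm hj u

theorem chordInterpolant_le (hG0 : G 0 = 0) (ht : LevelNodes G n t) {u : ℝ} (hu : 0 ≤ u)
    (hun : u ≤ t n) : chordInterpolant G t n u ≤ G u + 1 / n := by
  have hL := hingeSum_mono (ht.chordInterpolant_coeff_nonneg hGm hn hGconv) (t := t) (m := n)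
  have hG : ∀ v, 0 ≤ v → 0 ≤ G v := fun v hv => hG0 ▸ hGm Set.self_mem_Ici hv hv
  refine forall_le_of_forall_Ioc (P := fun u => 0 ≤ u → chordInterpolant G t n u ≤ G u + 1 / n)
    (fun u hu₀ hu => ?_) (fun j hj u hu hu₀ => ?_) u hun hu
  · calc chordInterpolant G t n u ≤ chordInterpolant G t n (t 0) := hL hu₀
      _ = 0 := by simp [ht.chordInterpolant_apply_knot hGm hn (Nat.zero_le n)]
      _ ≤ G u + 1 / n := by have := hG u hu; positivity
  · calc chordInterpolant G t n u ≤ chordInterpolant G t n (t (j + 1)) := hL hu.2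
      _ = G (t j) + 1 / n := by
          rw [ht.chordInterpolant_apply_knot hGm hn hj, (ht j).2]
          push_cast
          ring
      _ ≤ G u + 1 / n := by gcongr; exact hGm (ht j).1 hu₀ hu.1.le

theorem one_lt_chordInterpolant (ht : LevelNodes G n t) {u : ℝ} (hu : t n < u) :
    1 < chordInterpolant G t n u := by
  obtain ⟨k, rfl⟩ : ∃ k, n = k + 1 := ⟨n - 1, by omega⟩
  have h := chordInterpolant_knot_add_mul_le (ht.chordSlope_monotone hGm hn hGconv)
    (ht.strictMono hGm hn).monotone (le_refl (k + 1)) u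
  rw [ht.apply_self hn, (ht 0).2] at h
  have := mul_pos (ht.chordSlope_succ_pos hGm hn k) (sub_pos.2 hu)
  simp only [CharP.cast_eq_zero, zero_div, sub_zero] at h
  linarith

theorem one_lt_apply (ht : LevelNodes G n t) {u : ℝ} (hu : t n < u) : 1 < G u := by
  obtain ⟨k, rfl⟩ : ∃ k, n = k + 1 := ⟨n - 1, by omega⟩
  have h := hGconv.add_slope_mul_sub_le (ht k).1 ((ht _).1.trans hu.le)
    (ht.strictMono hGm hn k.lt_succ_self) hu.le
  have := mul_pos (ht.chordSlope_succ_pos hGm hn k) (sub_pos.2 hu)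
  rw [ht.apply_self hn] at h
  exact lt_of_lt_of_le (by simp only [chordSlope] at this; linarith) h

theorem sum_le_one_of_sum_chordInterpolant_le_one (ht : LevelNodes G n t) {y : Fin n → ℝ}
    (hy : 0 ≤ y) (h : ∑ i, chordInterpolant G t n (y i) ≤ 1) : ∑ i, G (y i) ≤ 1 := by
  refine le_trans (sum_le_sum fun i _ => ht.le_chordInterpolant hGm hn hGconv (hy i) ?_) h
  refine le_of_not_gt fun hlt => (ht.one_lt_chordInterpolant hGm hn hGconv hlt).not_ge ?_
  exact (single_le_sum (fun j _ => hingeSum_nonneg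
    (ht.chordInterpolant_coeff_nonneg hGm hn hGconv) (y j)) (mem_univ i)).trans h

theorem sum_chordInterpolant_half_le_one (hG0 : G 0 = 0) (ht : LevelNodes G n t)
    {y : Fin n → ℝ} (hy : 0 ≤ y) (h : ∑ i, G (y i) ≤ 1) :
    ∑ i, chordInterpolant G t n (y i / 2) ≤ 1 := by
  have hG : ∀ v, 0 ≤ v → 0 ≤ G v := fun v hv => hG0 ▸ hGm Set.self_mem_Ici hv hv
  have hterm : ∀ i, chordInterpolant G t n (y i / 2) ≤ (G (y i) + 1 / n) / 2 := fun i => by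
    have hyn : y i ≤ t n := le_of_not_gt fun hlt => (ht.one_lt_apply hGm hn hGconv hlt).not_ge
      ((single_le_sum (fun j _ => hG (y j) (hy j)) (mem_univ i)).trans h)
    calc chordInterpolant G t n (y i / 2) = chordInterpolant G t n (2⁻¹ * y i) := by
          rw [div_eq_inv_mul]
      _ ≤ 2⁻¹ * chordInterpolant G t n (y i) :=
          hingeSum_mul_le (ht.chordInterpolant_coeff_nonneg hGm hn hGconv) (fun k => (ht k).1)
            (by norm_num) (by norm_num) (y i)
      _ ≤ (G (y i) + 1 / n) / 2 := by
          have := ht.chordInterpolant_le hGm hn hGconv hG0 (hy i) hyn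
          linarith
  calc ∑ i, chordInterpolant G t n (y i / 2) ≤ ∑ i : Fin n, (G (y i) + 1 / n) / 2 :=
        sum_le_sum fun i _ => hterm i
    _ = (∑ i, G (y i) + 1) / 2 := by
        rw [← sum_div, sum_add_distrib, sum_const, card_univ, Fintype.card_fin, nsmul_eq_mul,
          mul_one_div_cancel (by positivity)]
    _ ≤ 1 := by linarith

theorem exists_sum_chordInterpolant_div_le_one (ht : LevelNodes G n t) {x : Fin n → ℝ}
    (hx : 0 ≤ x) : ∃ α > 0, ∑ i, chordInterpolant G t n (x i / α) ≤ 1 := by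
  refine exists_sum_div_le_one hx ((ht 0).1.trans_lt (ht.strictMono hGm hn zero_lt_one))
    fun u _ hu => ?_
  calc chordInterpolant G t n u ≤ chordInterpolant G t n (t 1) :=
        hingeSum_mono (ht.chordInterpolant_coeff_nonneg hGm hn hGconv) hu
    _ = 1 / n := by rw [ht.chordInterpolant_apply_knot hGm hn hn, Nat.cast_one]

end LevelNodes

/-- Every Orlicz norm on ℝⁿ is `2`-approximated by the Orlicz norm of a sum of `n` hinge
functions `t ↦ max{0, aᵢ·t − bᵢ}`. -/
theorem orliczNorm_piecewise_linear_approx (G : ℝ → ℝ) (hG : IsOrliczFunction G)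
    (n : ℕ) (hn : 1 ≤ n) :
    ∃ a b : Fin n → ℝ, (∀ i, 0 ≤ a i) ∧ (∀ i, 0 ≤ b i) ∧
      ∀ x : Fin n → ℝ, 0 ≤ x →
        orliczNorm G x ≤ orliczNorm (fun t => ∑ i, max 0 (a i * t - b i)) x ∧
        orliczNorm (fun t => ∑ i, max 0 (a i * t - b i)) x ≤ 2 * orliczNorm G x := by
  obtain ⟨hGc, hGconv, hGm, hG0, htop⟩ := hG
  obtain ⟨t, ht⟩ := exists_levelNodes hGc hG0 htop n
  have hc := ht.chordInterpolant_coeff_nonneg hGm hn hGconv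
  refine ⟨fun i => chordSlope G t (i + 1) - chordSlope G t i,
    fun i => (chordSlope G t (i + 1) - chordSlope G t i) * t i, fun i => hc i,
    fun i => mul_nonneg (hc i) (ht i).1, fun x hx => ?_⟩
  have hL : (fun u => ∑ i : Fin n, max 0 ((chordSlope G t (i + 1) - chordSlope G t i) * u -
      (chordSlope G t (i + 1) - chordSlope G t i) * t i)) = chordInterpolant G t n :=
    funext fun u => (hingeSum_eq_sum_max hc u).symm
  have hLG : ∀ y : Fin n → ℝ, 0 ≤ y → ∑ i, chordInterpolant G t n (y i) ≤ 1 →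
      ∑ i, G (y i / 1) ≤ 1 := fun y hy h => by
    simpa using ht.sum_le_one_of_sum_chordInterpolant_le_one hGm hn hGconv hy h
  obtain ⟨α, hα, hLα⟩ := ht.exists_sum_chordInterpolant_div_le_one hGm hn hGconv hx
  have hGα : ∑ i, G (x i / α) ≤ 1 := by
    simpa using hLG (fun i => x i / α) (fun i => div_nonneg (hx i) hα.le) hLα
  rw [hL]
  exact ⟨by simpa using orliczNorm_le_mul hx one_pos ⟨α, hα, hLα⟩ hLG,
    orliczNorm_le_mul hx two_pos ⟨α, hα, hGα⟩ fun y hy h =>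
      ht.sum_chordInterpolant_half_le_one hGm hn hGconv hG0 hy h⟩
end
end
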